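/- arXiv:1310.2877 — 3 statements merged into one kernel-verified Lean document; each statement's English description precedes it below -/
import Mathlib

section
/- Let p be a prime and s, n, m positive integers with n ≤ m ≤ s. Then the p-adic valuation of M(s,n) is at most the p-adic valuation of M(s,m), where M(s,k) denotes the gcd of all multinomial coefficients over compositions of s into k positive parts. -/
/-!
Merging the first two parts of a composition of `s` into `k + 1` parts gives a composition into
`k` parts, and the multinomial coefficient changes by the factor `(a + b).choose a`. Hence every
multinomial coefficient with `k + 1` parts is a multiple of one with `k` parts, so
`M(s, k) ∣ M(s, k + 1)` for `k ≥ 1`. As `M(s, m) ≠ 0` for `1 ≤ m ≤ s`, divisibility passes to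
`p`-adic valuations.
-/

/-- `Msn s k` is the gcd of the multinomial coefficients over all
compositions of `s` into `k` positive parts. -/
def Msn (s k : ℕ) : ℕ :=
  (((Finset.Nat.antidiagonalTuple k s).filter (fun f => ∀ i, 0 < f i)).gcd
    (fun f => Nat.multinomial Finset.univ f))

open Finset

theorem Nat.multinomial_univ_fin_succ {n : ℕ} (f : Fin (n + 1) → ℕ) :
    multinomial univ f =
      (f 0 + ∑ i, Fin.tail f i).choose (f 0) * multinomial univ (Fin.tail f) := by
  rw [Fin.univ_succ, multinomial_cons]
  simp [multinomial, Fin.tail]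

def mergeFirstTwo {n : ℕ} (f : Fin (n + 2) → ℕ) : Fin (n + 1) → ℕ :=
  Fin.cons (f 0 + f 1) (Fin.tail (Fin.tail f))

theorem sum_mergeFirstTwo {n : ℕ} (f : Fin (n + 2) → ℕ) : ∑ i, mergeFirstTwo f i = ∑ i, f i := by
  simp [mergeFirstTwo, Fin.sum_univ_succ, Fin.tail, add_assoc]

theorem mergeFirstTwo_pos {n : ℕ} {f : Fin (n + 2) → ℕ} (hf : ∀ i, 0 < f i) :
    ∀ i, 0 < mergeFirstTwo f i :=
  Fin.cases (Nat.add_pos_left (hf 0) _) (fun i => hf i.succ.succ)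

theorem Nat.multinomial_univ_eq_choose_mul_mergeFirstTwo {n : ℕ} (f : Fin (n + 2) → ℕ) :
    multinomial univ f = (f 0 + f 1).choose (f 0) * multinomial univ (mergeFirstTwo f) := by
  rw [multinomial_univ_fin_succ, multinomial_univ_fin_succ (Fin.tail f), mergeFirstTwo,
    multinomial_univ_fin_succ]
  simp only [Fin.cons_zero, Fin.tail_cons, Fin.sum_univ_succ (Fin.tail f)]
  simp only [Fin.tail, Fin.succ_zero_eq_one]
  have h := choose_mul (n := f 0 + f 1 + ∑ i : Fin n, f i.succ.succ) (le_add_right (f 0) (f 1))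
  rw [add_tsub_cancel_left, add_assoc (f 0), add_tsub_cancel_left, ← add_assoc] at h
  rw [← add_assoc, ← mul_assoc, ← h]
  ring

theorem mem_filter_antidiagonalTuple_pos {k s : ℕ} {f : Fin k → ℕ} :
    f ∈ (Nat.antidiagonalTuple k s).filter (fun f => ∀ i, 0 < f i) ↔
      ∑ i, f i = s ∧ ∀ i, 0 < f i := by
  rw [mem_filter, Nat.mem_antidiagonalTuple]

theorem Msn_dvd_Msn_succ (s k : ℕ) : Msn s (k + 1) ∣ Msn s (k + 2) := by
  refine dvd_gcd fun f hf => ?_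
  rw [mem_filter_antidiagonalTuple_pos] at hf
  have hmerge :
      mergeFirstTwo f ∈ (Nat.antidiagonalTuple (k + 1) s).filter (fun f => ∀ i, 0 < f i) :=
    mem_filter_antidiagonalTuple_pos.2 ⟨(sum_mergeFirstTwo f).trans hf.1, mergeFirstTwo_pos hf.2⟩
  rw [Nat.multinomial_univ_eq_choose_mul_mergeFirstTwo]
  exact (gcd_dvd hmerge).mul_left _

theorem Msn_dvd_Msn_of_le {s n m : ℕ} (hn : 0 < n) (hnm : n ≤ m) : Msn s n ∣ Msn s m := by
  induction m, hnm using Nat.le_induction with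
  | base => rfl
  | succ m hnm ih =>
    obtain ⟨k, rfl⟩ := Nat.exists_eq_add_one_of_ne_zero (hn.trans_le hnm).ne'
    exact ih.trans (Msn_dvd_Msn_succ s k)

theorem Msn_ne_zero {s m : ℕ} (hm : 0 < m) (hms : m ≤ s) : Msn s m ≠ 0 := by
  obtain ⟨k, rfl⟩ := Nat.exists_eq_add_one_of_ne_zero hm.ne'
  have hmem : (Fin.cons (s - k) (fun _ => 1) : Fin (k + 1) → ℕ) ∈
      (Nat.antidiagonalTuple (k + 1) s).filter (fun f => ∀ i, 0 < f i) := by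
    refine mem_filter_antidiagonalTuple_pos.2 ⟨?_, Fin.cases (by simpa using hms) (by simp)⟩
    simp only [Fin.sum_univ_succ, Fin.cons_zero, Fin.cons_succ, sum_const, card_univ,
      Fintype.card_fin, smul_eq_mul, mul_one]
    omega
  exact mt (gcd_eq_zero_iff.1 · _ hmem) (Nat.multinomial_pos _ _).ne'

theorem padicValNat_le_of_dvd {p a b : ℕ} (hb : b ≠ 0) (hab : a ∣ b) :
    padicValNat p a ≤ padicValNat p b := by
  rcases eq_or_ne p 1 with rfl | hp
  · simp
  · exact (padicValNat_dvd_iff_le_of_ne_one hp hb).1 (pow_padicValNat_dvd.trans hab)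

theorem padicValNat_Msn_mono_general (p s n m : ℕ) (hn : 0 < n)
    (hnm : n ≤ m) (hms : m ≤ s) :
    padicValNat p (Msn s n) ≤ padicValNat p (Msn s m) :=
  padicValNat_le_of_dvd (Msn_ne_zero (hn.trans_le hnm) hms) (Msn_dvd_Msn_of_le hn hnm)

/-- For a prime `p` and positive integers `s, n, m` with `n ≤ m ≤ s`, the `p`-adic valuation
of `M(s,n)` is at most that of `M(s,m)`. -/
theorem padicValNat_Msn_mono (p s n m : ℕ) (hp : Nat.Prime p) (hs : 0 < s) (hn : 0 < n)
    (hnm : n ≤ m) (hms : m ≤ s) :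
    padicValNat p (Msn s n) ≤ padicValNat p (Msn s m) :=
  padicValNat_Msn_mono_general p s n m hn hnm hms
end

section
/- For every prime p and positive integers s, n with n ≤ s, the gcd M(s,n) of multinomial coefficients over compositions of s into n positive parts divides M(s,n+1) whenever n+1 ≤ s. -/
open Finset

namespace Nat

theorem multinomial_univ_fin_cons {m : ℕ} (a : ℕ) (f : Fin m → ℕ) :
    multinomial univ (Fin.cons a f : Fin (m + 1) → ℕ) =
      (a + ∑ i, f i).choose a * multinomial univ f := by
  rw [Fin.univ_succ, multinomial_cons]
  simp [multinomial, Finset.sum_map, Finset.prod_map]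

theorem multinomial_univ_fin_cons_cons {m : ℕ} (a b : ℕ) (f : Fin m → ℕ) :
    multinomial univ (Fin.cons a (Fin.cons b f : Fin (m + 1) → ℕ) : Fin (m + 2) → ℕ) =
      (a + b).choose a * multinomial univ (Fin.cons (a + b) f : Fin (m + 1) → ℕ) := by
  have hchoose : (a + b + ∑ i, f i).choose (a + b) * (a + b).choose a =
      (a + (b + ∑ i, f i)).choose a * (b + ∑ i, f i).choose b := by
    rw [choose_mul le_self_add, add_assoc, add_tsub_cancel_left, add_tsub_cancel_left]
  simp only [multinomial_univ_fin_cons, Fin.sum_cons]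
  rw [← mul_assoc, ← hchoose]
  ring

end Nat

theorem Msn_dvd_succ_general (s n : ℕ) (hn : 0 < n) :
    Msn s n ∣ Msn s (n + 1) := by
  obtain ⟨m, rfl⟩ := Nat.exists_eq_add_one_of_ne_zero hn.ne'
  refine Finset.dvd_gcd fun f hf => ?_
  induction f using Fin.consCases with | cons a f =>
  induction f using Fin.consCases with | cons b f =>
  have hmerged : (Fin.cons (a + b) f : Fin (m + 1) → ℕ) ∈
      (Nat.antidiagonalTuple (m + 1) s).filter (fun f => ∀ i, 0 < f i) := by
    simp only [mem_filter, Nat.mem_antidiagonalTuple, Fin.sum_cons, Fin.forall_fin_succ,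
      Fin.cons_zero, Fin.cons_succ] at hf ⊢
    obtain ⟨hsum, ha, hb, hf⟩ := hf
    exact ⟨by omega, by omega, hf⟩
  rw [Nat.multinomial_univ_fin_cons_cons]
  exact (gcd_dvd hmerged).trans (dvd_mul_left _ _)

/-- For every prime `p` and positive integers `s, n` with `n ≤ s` and `n + 1 ≤ s`, the gcd
`M(s,n)` of multinomial coefficients over compositions of `s` into `n` positive parts
divides `M(s,n+1)`. -/
theorem Msn_dvd_succ (p s n : ℕ) (hp : Nat.Prime p) (hs : 0 < s) (hn : 0 < n)
    (hns : n ≤ s) (hns' : n + 1 ≤ s) :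
    Msn s n ∣ Msn s (n + 1) :=
  Msn_dvd_succ_general s n hn
end

section
/- Let A be a commutative ring, p a prime, and s, d positive integers with d < s. Suppose N is an A-module such that for every composition (λ_1,...,λ_{d+1}) of s into d+1 positive parts, the multinomial coefficient C(s;λ_1,...,λ_{d+1}) annihilates N (i.e., multiplication by it is zero on N). Then N is annihilated by M(s,d+1), the gcd of these multinomial coefficients; in particular if N is p-primary, then p^r N = 0 with r = ⌈(d+1-digits_p(s))/(p-1)⌉ when d+1 > digits_p(s). -/
/-!
The first claim holds because the annihilator of an element is closed under gcds. For the second,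
the order of an element of `N` is a power of `p` dividing every multinomial coefficient `(s; λ)`,
so it suffices to exhibit one composition with `v_p (s; λ) ≤ r`. Legendre's formula gives
`(p - 1) · v_p (s; λ₁, …, λₙ) = ∑ digits_p(λᵢ) - digits_p(s)`, which also makes `digits_p`
subadditive. Starting from the base `p` expansion and repeatedly splitting some `p^(i+1)` into `p`
copies of `p^i`, write `s` as a sum of `digits_p(s) + (p - 1) r ≥ d + 1` powers of `p`; keeping `d`
of them and merging the rest into one part yields a composition with
`∑ digits_p(λᵢ) ≤ digits_p(s) + (p - 1) r`.
-/

/-- The sum of the digits of `n` in base `p`. -/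
def digitSum (p n : ℕ) : ℕ := (Nat.digits p n).sum

/-- The multinomial coefficient `s!/(λ₁!⋯λₙ!)` associated to a list `l = [λ₁,…,λₙ]`. -/
def listMultinomial (l : List ℕ) : ℕ :=
  Nat.factorial l.sum / (l.map Nat.factorial).prod

open Nat

lemma listMultinomial_mul_prod_factorial (l : List ℕ) :
    listMultinomial l * (l.map Nat.factorial).prod = l.sum ! := by
  refine Nat.div_mul_cancel ?_
  simpa [List.prod_ofFn, List.sum_ofFn] using
    Nat.prod_factorial_dvd_factorial_sum (Finset.univ : Finset (Fin l.length)) l.get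

lemma listMultinomial_pos (l : List ℕ) : 0 < listMultinomial l := by
  have h := listMultinomial_mul_prod_factorial l
  exact Nat.pos_of_mul_pos_right (h ▸ factorial_pos _ : 0 < _)

lemma listMultinomial_ofFn {n : ℕ} (f : Fin n → ℕ) :
    listMultinomial (List.ofFn f) = Nat.multinomial Finset.univ f := by
  simp [listMultinomial, Nat.multinomial, List.sum_ofFn, List.prod_ofFn]

lemma digitSum_pow {p : ℕ} (hp : 1 < p) (i : ℕ) : digitSum p (p ^ i) = 1 := by
  have h := Nat.digits_base_pow_mul (k := i) hp Nat.one_pos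
  rw [mul_one, Nat.digits_of_lt p 1 one_ne_zero hp] at h
  simp [digitSum, h]

section Legendre

variable {p : ℕ} [Fact p.Prime]

lemma sub_one_mul_padicValNat_factorial_add_digitSum (n : ℕ) :
    (p - 1) * padicValNat p n ! + digitSum p n = n := by
  rw [sub_one_mul_padicValNat_factorial, digitSum]
  exact Nat.sub_add_cancel (Nat.digit_sum_le p n)

lemma padicValNat_prod_map_factorial (l : List ℕ) :
    padicValNat p (l.map Nat.factorial).prod = (l.map fun m => padicValNat p m !).sum := by
  induction l with
  | nil => simp
  | cons a l ih =>
    rw [List.map_cons, List.prod_cons,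
      padicValNat.mul (factorial_ne_zero a) (List.prod_ne_zero (by simp [factorial_ne_zero])), ih]
    simp

lemma sub_one_mul_padicValNat_listMultinomial_add_digitSum (l : List ℕ) :
    (p - 1) * padicValNat p (listMultinomial l) + digitSum p l.sum = (l.map (digitSum p)).sum := by
  have hparts : (p - 1) * (l.map fun m => padicValNat p m !).sum + (l.map (digitSum p)).sum
      = l.sum := by
    induction l with
    | nil => simp
    | cons a l ih =>
      have := sub_one_mul_padicValNat_factorial_add_digitSum (p := p) a
      simp only [List.map_cons, List.sum_cons]
      linarith
  have hval := congrArg (padicValNat p) (listMultinomial_mul_prod_factorial l)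
  rw [padicValNat.mul (listMultinomial_pos l).ne' (List.prod_ne_zero (by simp [factorial_ne_zero])),
    padicValNat_prod_map_factorial] at hval
  have hsum := sub_one_mul_padicValNat_factorial_add_digitSum (p := p) l.sum
  rw [← hval] at hsum
  linarith

lemma digitSum_sum_le (l : List ℕ) : digitSum p l.sum ≤ (l.map (digitSum p)).sum :=
  (sub_one_mul_padicValNat_listMultinomial_add_digitSum (p := p) l).symm ▸ Nat.le_add_left _ _

end Legendre

section PowerLists

variable {p : ℕ}

lemma exists_pow_list_length_eq_digitSum (hp : 1 < p) (s : ℕ) :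
    ∃ L : List ℕ, (∀ m ∈ L, ∃ i, p ^ i = m) ∧ L.sum = s ∧ L.length = digitSum p s := by
  induction s using Nat.strong_induction_on with
  | _ s ih =>
    rcases Nat.eq_zero_or_pos s with rfl | hs
    · exact ⟨[], by simp, rfl, by simp [digitSum]⟩
    obtain ⟨L, hpow, hsum, hlen⟩ := ih (s / p) (Nat.div_lt_self hs hp)
    refine ⟨List.replicate (s % p) 1 ++ L.map (p * ·), ?_, ?_, ?_⟩
    · simp only [List.mem_append, List.mem_replicate, List.mem_map]
      rintro m (⟨-, rfl⟩ | ⟨_, hm, rfl⟩)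
      · exact ⟨0, pow_zero p⟩
      · obtain ⟨i, rfl⟩ := hpow _ hm
        exact ⟨i + 1, pow_succ' p i⟩
    · rw [List.sum_append, List.sum_replicate, List.sum_map_mul_left, List.map_id', hsum,
        smul_eq_mul, mul_one, Nat.mod_add_div]
    · simp [digitSum, Nat.digits_def' hp hs, hlen]

lemma exists_pow_list_split (hp : 1 < p) {L : List ℕ} (hpow : ∀ m ∈ L, ∃ i, p ^ i = m)
    (hlt : L.length < L.sum) :
    ∃ L' : List ℕ, (∀ m ∈ L', ∃ i, p ^ i = m) ∧ L'.sum = L.sum ∧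
      L'.length = L.length + (p - 1) := by
  obtain ⟨m, hm, hm1⟩ : ∃ m ∈ L, m ≠ 1 := by
    by_contra! h
    rw [List.eq_replicate_length.mpr h] at hlt
    simp at hlt
  obtain ⟨i, rfl⟩ := hpow m hm
  obtain ⟨j, rfl⟩ : ∃ j, i = j + 1 := Nat.exists_eq_add_one.mpr
    (Nat.pos_of_ne_zero fun h => hm1 (by simp [h]))
  refine ⟨List.replicate p (p ^ j) ++ L.erase (p ^ (j + 1)), ?_, ?_, ?_⟩
  · simp only [List.mem_append, List.mem_replicate]
    rintro m (⟨-, rfl⟩ | hm')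
    · exact ⟨j, rfl⟩
    · exact hpow m (List.mem_of_mem_erase hm')
  · rw [List.sum_append, List.sum_replicate, smul_eq_mul, ← pow_succ',
      (List.perm_cons_erase hm).sum_eq, List.sum_cons]
  · rw [List.length_append, List.length_replicate, List.length_erase_of_mem hm]
    have := List.length_pos_of_mem hm
    omega

lemma exists_pow_list_length_eq (hp : 1 < p) {s j : ℕ} (h : digitSum p s + (p - 1) * j ≤ s) :
    ∃ L : List ℕ, (∀ m ∈ L, ∃ i, p ^ i = m) ∧ L.sum = s ∧
      L.length = digitSum p s + (p - 1) * j := by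
  induction j with
  | zero => simpa using exists_pow_list_length_eq_digitSum hp s
  | succ j ih =>
    rw [Nat.mul_succ] at h ⊢
    obtain ⟨L, hpow, hsum, hlen⟩ := ih (by omega)
    obtain ⟨L', hpow', hsum', hlen'⟩ := exists_pow_list_split hp hpow (by omega)
    exact ⟨L', hpow', hsum'.trans hsum, by omega⟩

end PowerLists

lemma exists_composition_padicValNat_listMultinomial_le {p : ℕ} [Fact p.Prime] {s d r : ℕ}
    (hd : d + 1 ≤ digitSum p s + (p - 1) * r) (hs : digitSum p s + (p - 1) * r ≤ s) :
    ∃ l : List ℕ, l.length = d + 1 ∧ (∀ x ∈ l, 0 < x) ∧ l.sum = s ∧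
      padicValNat p (listMultinomial l) ≤ r := by
  have hp : p.Prime := Fact.out
  obtain ⟨L, hpow, hsum, hlen⟩ := exists_pow_list_length_eq hp.one_lt hs
  have hLpos : ∀ m ∈ L, 0 < m := fun m hm => by
    obtain ⟨i, rfl⟩ := hpow m hm
    exact pow_pos hp.pos i
  have hdigits : (L.map (digitSum p)).sum = L.length := by
    rw [List.map_congr_left (g := fun _ => 1) fun m hm => by
      obtain ⟨i, rfl⟩ := hpow m hm
      exact digitSum_pow hp.one_lt i]
    simp
  refine ⟨L.take d ++ [(L.drop d).sum], by simp; omega, ?_, by simp [hsum], ?_⟩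
  · simp only [List.mem_append, List.mem_singleton]
    rintro x (hx | rfl)
    · exact hLpos x (List.mem_of_mem_take hx)
    · exact List.sum_pos _ (fun m hm => hLpos m (List.mem_of_mem_drop hm))
        (List.ne_nil_of_length_pos (by simp; omega))
  · have hval := sub_one_mul_padicValNat_listMultinomial_add_digitSum (p := p)
      (L.take d ++ [(L.drop d).sum])
    have hmerge := digitSum_sum_le (p := p) (L.drop d)
    have hsplit : ((L.take d).map (digitSum p)).sum + ((L.drop d).map (digitSum p)).sum
        = L.length := by
      rw [List.map_take, List.map_drop, List.sum_take_add_sum_drop, hdigits]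
    simp only [List.sum_append, List.map_append, List.map_singleton, List.sum_singleton,
      List.sum_take_add_sum_drop, hsum] at hval
    exact Nat.le_of_mul_le_mul_left (by omega) (Nat.sub_pos_of_lt hp.one_lt)

lemma toNat_ceil_sub_div_le_iff {a b c k : ℕ} (hc : 0 < c) :
    ⌈((a : ℚ) - b) / c⌉.toNat ≤ k ↔ a ≤ b + c * k := by
  rw [Int.toNat_le, Int.ceil_le, div_le_iff₀ (by exact_mod_cast hc), sub_le_iff_le_add]
  norm_cast
  rw [add_comm, mul_comm]

section Torsion

variable {N : Type*} [AddMonoid N] {x : N}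

lemma Finset.gcd_nsmul_eq_zero {ι : Type*} {t : Finset ι} {f : ι → ℕ}
    (h : ∀ i ∈ t, f i • x = 0) : t.gcd f • x = 0 :=
  addOrderOf_dvd_iff_nsmul_eq_zero.mp
    (Finset.dvd_gcd fun i hi => addOrderOf_dvd_of_nsmul_eq_zero (h i hi))

lemma pow_nsmul_eq_zero_of_padicValNat_le {p n k r : ℕ} (hp : p.Prime) (hk : p ^ k • x = 0)
    (hn : n • x = 0) (hn0 : n ≠ 0) (hr : padicValNat p n ≤ r) : p ^ r • x = 0 := by
  have : Fact p.Prime := ⟨hp⟩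
  obtain ⟨j, -, hj⟩ := (Nat.dvd_prime_pow hp).mp (addOrderOf_dvd_of_nsmul_eq_zero hk)
  have hjn : j ≤ padicValNat p n :=
    (padicValNat_dvd_iff_le hn0).mp (hj ▸ addOrderOf_dvd_of_nsmul_eq_zero hn)
  exact addOrderOf_dvd_iff_nsmul_eq_zero.mp (hj ▸ pow_dvd_pow p (hjn.trans hr))

end Torsion

theorem annihilator_Msn_general (N : Type*) [AddCommGroup N]
    (p s d : ℕ) (hp : Nat.Prime p) (hds : d < s)
    (hann : ∀ l : List ℕ, l.length = d + 1 → (∀ x ∈ l, 0 < x) → l.sum = s →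
      ∀ x : N, (listMultinomial l) • x = 0) :
    (∀ x : N, (Msn s (d + 1)) • x = 0) ∧
    (digitSum p s < d + 1 → (∀ x : N, ∃ k : ℕ, p ^ k • x = 0) →
      ∀ x : N,
        p ^ (⌈((d : ℚ) + 1 - (digitSum p s : ℚ)) / ((p : ℚ) - 1)⌉.toNat) • x = 0) := by
  have : Fact p.Prime := ⟨hp⟩
  refine ⟨fun x => Finset.gcd_nsmul_eq_zero fun f hf => ?_, fun _ htorsion x => ?_⟩
  · rw [Finset.mem_filter, Finset.Nat.mem_antidiagonalTuple] at hf
    rw [← listMultinomial_ofFn]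
    exact hann _ (List.length_ofFn ..) (List.forall_mem_ofFn_iff.mpr hf.2)
      (by rw [List.sum_ofFn, hf.1]) x
  · have hr : ∀ k, ⌈((d : ℚ) + 1 - (digitSum p s : ℚ)) / ((p : ℚ) - 1)⌉.toNat ≤ k ↔
        d + 1 ≤ digitSum p s + (p - 1) * k := fun k => by
      rw [← toNat_ceil_sub_div_le_iff (Nat.sub_pos_of_lt hp.one_lt)]
      push_cast [hp.one_le]
      rfl
    set r := ⌈((d : ℚ) + 1 - (digitSum p s : ℚ)) / ((p : ℚ) - 1)⌉.toNat
    -- Legendre: `s = digits_p(s) + (p - 1) v_p(s!)`, and `r ≤ v_p(s!)` because `d < s`.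
    have hs : digitSum p s + (p - 1) * r ≤ s := by
      have hlegendre := sub_one_mul_padicValNat_factorial_add_digitSum (p := p) s
      have := Nat.mul_le_mul_left (p - 1) ((hr (padicValNat p s !)).mpr (by omega))
      omega
    obtain ⟨l, hlen, hpos, hsum, hval⟩ :=
      exists_composition_padicValNat_listMultinomial_le ((hr r).mp le_rfl) hs
    obtain ⟨k, hk⟩ := htorsion x
    exact pow_nsmul_eq_zero_of_padicValNat_le hp hk (hann l hlen hpos hsum x)
      (listMultinomial_pos l).ne' hval

/-- If every multinomial coefficient of a composition of `s` into `d+1` positive parts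
annihilates the `A`-module `N`, then `N` is annihilated by `M(s,d+1)`; in particular, if
`N` is `p`-primary and `d+1 > digits_p(s)`, then `p^r` annihilates `N` for
`r = ⌈(d+1-digits_p(s))/(p-1)⌉`. -/
theorem annihilator_Msn (A : Type*) [CommRing A] (N : Type*) [AddCommGroup N] [Module A N]
    (p s d : ℕ) (hp : Nat.Prime p) (hs : 0 < s) (hd : 0 < d) (hds : d < s)
    (hann : ∀ l : List ℕ, l.length = d + 1 → (∀ x ∈ l, 0 < x) → l.sum = s →
      ∀ x : N, (listMultinomial l) • x = 0) :
    (∀ x : N, (Msn s (d + 1)) • x = 0) ∧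
    (digitSum p s < d + 1 → (∀ x : N, ∃ k : ℕ, p ^ k • x = 0) →
      ∀ x : N,
        p ^ (⌈((d : ℚ) + 1 - (digitSum p s : ℚ)) / ((p : ℚ) - 1)⌉.toNat) • x = 0) :=
  annihilator_Msn_general N p s d hp hds hann
end
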